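/- Let a > 0, b > 0, s > 0, and 1 ≤ p < ∞. Then the following are equivalent: (i) there exists C ≥ 0 such that for every f ∈ L^p(ℂⁿ, dv_s) the function w ↦ |e^{−a|z|² + (a+b)⟨z,w⟩ − b|w|²}| f(w) is dv-integrable for a.e. z ∈ ℂⁿ and ∫_{ℂⁿ} |T_{a,b} f|^p dv_s ≤ C^p ∫_{ℂⁿ} |f|^p dv_s, where T_{a,b} f(z) = ∫_{ℂⁿ} |e^{−a|z|² + (a+b)⟨z,w⟩ − b|w|²}| f(w) dv(w); (ii) p·(a+b) = 2(s + p·a). -/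

import Mathlib

/-!
Write `σ = s / p`. Condition (ii) says `a + σ = b - σ =: α`, and then completing the square gives
`|K(z,w)| = e^{σ|z|²} e^{-α|z-w|²} e^{-σ|w|²}`. With `g(w) = |f(w)| e^{-σ|w|²}`, whose `L^p(dv)`
norm is a constant multiple of the `L^p(dv_s)` norm of `f`, the weight `e^{σ|z|²}` is absorbed by
`dv_s` and `T_{a,b}` becomes convolution of `g` with the Gaussian `e^{-α|·|²}`, which is bounded on
`L^p(dv)` with norm at most `(π/α)^n` by Schur's test (Hölder in `w`, then Tonelli).

Conversely, for `β > 0` completing the square gives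
`T_{a,b}(e^{(b-β)|·|²})(z) = (π/β)^n e^{((a+b)²/4β - a)|z|²}`. For `β = (a+b)²/(4(a+σ))` this is
`(π/β)^n e^{σ|z|²}`, so with `f = e^{(b-β)|·|²}` the measure `|T_{a,b} f|^p dv_s` is a positive
multiple of Lebesgue measure and has infinite mass. If (ii) fails then `a + σ ≠ b - σ`, and strict
AM-GM for these two numbers gives `(b - β) p < s`, that is, `f ∈ L^p(dv_s)`.
-/

open MeasureTheory

/-- `|z|² = |z₁|² + ⋯ + |zₙ|²` on `ℂⁿ`. -/
noncomputable def nsq {n : ℕ} (z : Fin n → ℂ) : ℝ := ∑ i, Complex.normSq (z i)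

/-- `⟨z,w⟩ = z₁·conj w₁ + ⋯ + zₙ·conj wₙ` on `ℂⁿ`. -/
noncomputable def herm {n : ℕ} (z w : Fin n → ℂ) : ℂ := ∑ i, z i * (starRingEnd ℂ) (w i)

/-- The Gaussian probability measure `dv_t(z) = (t/π)^n e^{-t|z|²} dv(z)` on `ℂⁿ`. -/
noncomputable def gaussMeasure (n : ℕ) (t : ℝ) : Measure (Fin n → ℂ) :=
  volume.withDensity fun z => ENNReal.ofReal ((t / Real.pi) ^ n * Real.exp (-t * nsq z))

/-- The kernel `e^{-a|z|² + (a+b)⟨z,w⟩ - b|w|²}`. -/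
noncomputable def kerAB {n : ℕ} (a b : ℝ) (z w : Fin n → ℂ) : ℂ :=
  Complex.exp (((-(a * nsq z) : ℝ) : ℂ) + ((a + b : ℝ) : ℂ) * herm z w
    - ((b * nsq w : ℝ) : ℂ))

open Real
open scoped ENNReal

section Schur

variable {X Y : Type*} [MeasurableSpace X] [MeasurableSpace Y]

theorem ENNReal.lintegral_mul_rpow_le {μ : Measure Y} {k g : Y → ℝ≥0∞} (hk : AEMeasurable k μ)
    (hg : AEMeasurable g μ) {p : ℝ} (hp : 1 ≤ p) :
    (∫⁻ y, k y * g y ∂μ) ^ p ≤ (∫⁻ y, k y ∂μ) ^ (p - 1) * ∫⁻ y, k y * g y ^ p ∂μ := by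
  have hp0 : 0 < p := zero_lt_one.trans_le hp
  have hq : 0 ≤ 1 - p⁻¹ := sub_nonneg.2 (inv_le_one_of_one_le₀ hp)
  have hsplit : ∀ y, k y * g y = (k y * g y ^ p) ^ p⁻¹ * k y ^ (1 - p⁻¹) := fun y => by
    rw [ENNReal.mul_rpow_of_nonneg _ _ (inv_nonneg.2 hp0.le), ← ENNReal.rpow_mul,
      mul_inv_cancel₀ hp0.ne', ENNReal.rpow_one, mul_right_comm, ← ENNReal.rpow_add_of_nonneg _ _
      (inv_nonneg.2 hp0.le) hq, add_sub_cancel, ENNReal.rpow_one]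
  have holder : ∫⁻ y, k y * g y ∂μ
      ≤ (∫⁻ y, k y * g y ^ p ∂μ) ^ p⁻¹ * (∫⁻ y, k y ∂μ) ^ (1 - p⁻¹) := by
    rw [lintegral_congr hsplit]
    exact ENNReal.lintegral_mul_norm_pow_le (hk.mul (hg.pow_const p)) hk
      (inv_nonneg.2 hp0.le) hq (add_sub_cancel _ _)
  calc (∫⁻ y, k y * g y ∂μ) ^ p
      ≤ ((∫⁻ y, k y * g y ^ p ∂μ) ^ p⁻¹ * (∫⁻ y, k y ∂μ) ^ (1 - p⁻¹)) ^ p := by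
        gcongr
    _ = (∫⁻ y, k y ∂μ) ^ (p - 1) * ∫⁻ y, k y * g y ^ p ∂μ := by
        rw [ENNReal.mul_rpow_of_nonneg _ _ hp0.le, ← ENNReal.rpow_mul, ← ENNReal.rpow_mul,
          inv_mul_cancel₀ hp0.ne', ENNReal.rpow_one, sub_mul, one_mul, inv_mul_cancel₀ hp0.ne',
          mul_comm]

theorem lintegral_rpow_lintegral_mul_le_of_lintegral_le {μ : Measure X} {ν : Measure Y}
    [SFinite μ] [SFinite ν] {k : X → Y → ℝ≥0∞} (hk : Measurable (Function.uncurry k))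
    {g : Y → ℝ≥0∞} (hg : AEMeasurable g ν) {A : ℝ≥0∞} (hrow : ∀ x, ∫⁻ y, k x y ∂ν ≤ A)
    (hcol : ∀ y, ∫⁻ x, k x y ∂μ ≤ A) {p : ℝ} (hp : 1 ≤ p) :
    ∫⁻ x, (∫⁻ y, k x y * g y ∂ν) ^ p ∂μ ≤ A ^ p * ∫⁻ y, g y ^ p ∂ν := by
  have hp0 : 0 ≤ p - 1 := sub_nonneg.2 hp
  have hkx (x : X) : Measurable (k x) := hk.comp measurable_prodMk_left
  have hky (y : Y) : Measurable fun x => k x y := hk.comp measurable_prodMk_right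
  have hkg : AEMeasurable (fun q : X × Y => k q.1 q.2 * g q.2 ^ p) (μ.prod ν) :=
    hk.aemeasurable.mul (hg.pow_const p).comp_snd
  calc ∫⁻ x, (∫⁻ y, k x y * g y ∂ν) ^ p ∂μ
      ≤ ∫⁻ x, A ^ (p - 1) * ∫⁻ y, k x y * g y ^ p ∂ν ∂μ := lintegral_mono fun x =>
        (ENNReal.lintegral_mul_rpow_le (hkx x).aemeasurable hg hp).trans
          (by gcongr; exact hrow x)
    _ = A ^ (p - 1) * ∫⁻ y, (∫⁻ x, k x y ∂μ) * g y ^ p ∂ν := by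
        rw [lintegral_const_mul'' _ hkg.lintegral_prod_right', lintegral_lintegral_swap hkg]
        congr 1
        refine lintegral_congr fun y => ?_
        exact lintegral_mul_const (g y ^ p) (hky y)
    _ ≤ A ^ (p - 1) * ∫⁻ y, A * g y ^ p ∂ν := by
        gcongr with y
        exact hcol y
    _ = A ^ p * ∫⁻ y, g y ^ p ∂ν := by
        rw [lintegral_const_mul'' _ (hg.pow_const p), ← mul_assoc]
        congr 1
        simpa using (ENNReal.rpow_add_of_nonneg (x := A) _ _ hp0 zero_le_one).symm

end Schur

theorem ofReal_norm_rpow {E : Type*} [NormedAddCommGroup E] (x : E) {p : ℝ} (hp : 0 ≤ p) :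
    ENNReal.ofReal (‖x‖ ^ p) = ‖x‖ₑ ^ p := by
  rw [← ENNReal.ofReal_rpow_of_nonneg (norm_nonneg x) hp, ofReal_norm]

theorem eLpNorm_ofReal_lt_top_iff {α E : Type*} [MeasurableSpace α] [NormedAddCommGroup E]
    {μ : Measure α} {f : α → E} {p : ℝ} (hp : 0 < p) :
    eLpNorm f (ENNReal.ofReal p) μ < ⊤ ↔ ∫⁻ x, ENNReal.ofReal (‖f x‖ ^ p) ∂μ < ⊤ := by
  rw [eLpNorm_lt_top_iff_lintegral_rpow_enorm_lt_top (by simpa using hp) ENNReal.ofReal_ne_top,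
    ENNReal.toReal_ofReal hp.le]
  simp_rw [ofReal_norm_rpow _ hp.le]

section Gaussian

variable {n : ℕ}

@[fun_prop]
theorem continuous_nsq : Continuous (nsq (n := n)) := by
  unfold nsq
  fun_prop

@[fun_prop]
theorem measurable_nsq : Measurable (nsq (n := n)) :=
  continuous_nsq.measurable

theorem nsq_sub_comm (z w : Fin n → ℂ) : nsq (z - w) = nsq (w - z) := by
  simp only [nsq, Pi.sub_apply, ← Complex.normSq_neg (z _ - w _), neg_sub]

theorem nsq_sub_smul (z w : Fin n → ℂ) (r : ℝ) :
    nsq (w - r • z) = nsq w - 2 * r * (herm z w).re + r ^ 2 * nsq z := by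
  simp only [nsq, herm, Complex.re_sum, Finset.mul_sum, ← Finset.sum_sub_distrib,
    ← Finset.sum_add_distrib]
  refine Finset.sum_congr rfl fun i _ => ?_
  simp only [Pi.sub_apply, Pi.smul_apply, Complex.real_smul, Complex.normSq_apply,
    Complex.sub_re, Complex.sub_im, Complex.mul_re, Complex.mul_im, Complex.ofReal_re,
    Complex.ofReal_im, Complex.conj_re, Complex.conj_im]
  ring

theorem integral_exp_neg_mul_nsq {t : ℝ} (ht : 0 < t) :
    ∫ w : Fin n → ℂ, rexp (-t * nsq w) = (π / t) ^ n := by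
  have hC : ∫ x : ℂ, rexp (-t * Complex.normSq x) = π / t := by
    simpa [Complex.normSq_eq_norm_sq] using
      GaussianFourier.integral_rexp_neg_mul_sq_norm (V := ℂ) ht
  simp_rw [nsq, Finset.mul_sum, Real.exp_sum]
  rw [integral_fintype_prod_volume_eq_prod (fun _ x => rexp (-t * Complex.normSq x)), hC,
    Finset.prod_const, Finset.card_univ, Fintype.card_fin]

theorem integral_exp_neg_mul_nsq_sub {t : ℝ} (ht : 0 < t) (c : Fin n → ℂ) :
    ∫ w, rexp (-t * nsq (w - c)) = (π / t) ^ n := by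
  rw [integral_sub_right_eq_self (fun w => rexp (-t * nsq w)) c, integral_exp_neg_mul_nsq ht]

theorem lintegral_exp_neg_mul_nsq_sub {t : ℝ} (ht : 0 < t) (c : Fin n → ℂ) :
    ∫⁻ w, ENNReal.ofReal (rexp (-t * nsq (w - c))) = ENNReal.ofReal ((π / t) ^ n) := by
  have hint : Integrable fun w : Fin n → ℂ => rexp (-t * nsq (w - c)) :=
    Integrable.of_integral_ne_zero (by rw [integral_exp_neg_mul_nsq_sub ht]; positivity)
  rw [← ofReal_integral_eq_lintegral_ofReal hint (ae_of_all _ fun _ => (exp_pos _).le),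
    integral_exp_neg_mul_nsq_sub ht]

theorem volume_univ_eq_top (hn : 0 < n) : (volume : Measure (Fin n → ℂ)) Set.univ = ⊤ := by
  have : Nonempty (Fin n) := ⟨⟨0, hn⟩⟩
  exact measure_univ_of_isAddLeftInvariant _

theorem lintegral_gaussMeasure (t : ℝ) (g : (Fin n → ℂ) → ℝ≥0∞) :
    ∫⁻ z, g z ∂gaussMeasure n t
      = ENNReal.ofReal ((t / π) ^ n) * ∫⁻ z, ENNReal.ofReal (rexp (-t * nsq z)) * g z := by
  have hρ : Measurable fun z : Fin n → ℂ => ENNReal.ofReal ((t / π) ^ n * rexp (-t * nsq z)) :=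
    ENNReal.measurable_ofReal.comp (by fun_prop)
  rw [gaussMeasure, lintegral_withDensity_eq_lintegral_mul_non_measurable _ hρ
    (ae_of_all _ fun _ => ENNReal.ofReal_lt_top), ← lintegral_const_mul' _ _ ENNReal.ofReal_ne_top]
  simp only [Pi.mul_apply, ENNReal.ofReal_mul' (exp_pos _).le, mul_assoc]

theorem absolutelyContinuous_gaussMeasure {t : ℝ} (ht : 0 < t) :
    (volume : Measure (Fin n → ℂ)) ≪ gaussMeasure n t :=
  withDensity_absolutelyContinuous' (ENNReal.measurable_ofReal.comp (by fun_prop)).aemeasurable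
    (ae_of_all _ fun _ => by positivity)

end Gaussian

section Kernel

variable {n : ℕ}

theorem norm_kerAB (a b : ℝ) (z w : Fin n → ℂ) :
    ‖kerAB a b z w‖ = rexp (-(a * nsq z) + (a + b) * (herm z w).re - b * nsq w) := by
  simp [kerAB, Complex.norm_exp, Complex.mul_re]

theorem norm_kerAB_eq {a b t : ℝ} (ht : t ≠ 0) (z w : Fin n → ℂ) :
    ‖kerAB a b z w‖ = rexp (((a + b) ^ 2 / (4 * t) - a) * nsq z)
      * rexp (-t * nsq (w - ((a + b) / (2 * t)) • z)) * rexp ((t - b) * nsq w) := by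
  rw [norm_kerAB, ← Real.exp_add, ← Real.exp_add, nsq_sub_smul]
  congr 1
  field_simp
  ring

end Kernel

section Operator

variable {n : ℕ}

/-- The operator `T_{a,b}` of the statement. -/
noncomputable def absKerOp (a b : ℝ) (f : (Fin n → ℂ) → ℂ) (z : Fin n → ℂ) : ℂ :=
  ∫ w, ((‖kerAB a b z w‖ : ℝ) : ℂ) * f w

/-- Condition (i) of the statement. -/
def AbsKerOpBounded (n : ℕ) (a b s p : ℝ) : Prop :=
  ∃ C : ℝ, 0 ≤ C ∧ ∀ f : (Fin n → ℂ) → ℂ, MemLp f (ENNReal.ofReal p) (gaussMeasure n s) →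
    (∀ᵐ z ∂(volume : Measure (Fin n → ℂ)),
      Integrable (fun w => ((‖kerAB a b z w‖ : ℝ) : ℂ) * f w) volume) ∧
    ∫⁻ z, ENNReal.ofReal (‖absKerOp a b f z‖ ^ p) ∂(gaussMeasure n s)
      ≤ ENNReal.ofReal (C ^ p) * ∫⁻ z, ENNReal.ofReal (‖f z‖ ^ p) ∂(gaussMeasure n s)

theorem memLp_exp_mul_nsq {s p θ : ℝ} (hp : 0 < p) (hθ : θ * p < s) :
    MemLp (fun z : Fin n → ℂ => ((rexp (θ * nsq z) : ℝ) : ℂ)) (ENNReal.ofReal p)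
      (gaussMeasure n s) := by
  refine ⟨by fun_prop, (eLpNorm_ofReal_lt_top_iff hp).2 ?_⟩
  have hpt (z : Fin n → ℂ) : ENNReal.ofReal (rexp (-s * nsq z))
      * ENNReal.ofReal (‖((rexp (θ * nsq z) : ℝ) : ℂ)‖ ^ p)
      = ENNReal.ofReal (rexp (-(s - θ * p) * nsq z)) := by
    rw [Complex.norm_real, Real.norm_of_nonneg (exp_pos _).le, ← Real.exp_mul,
      ← ENNReal.ofReal_mul (exp_pos _).le, ← Real.exp_add]
    ring_nf
  have hgauss := lintegral_exp_neg_mul_nsq_sub (n := n) (sub_pos.2 hθ) 0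
  simp only [sub_zero] at hgauss
  rw [lintegral_gaussMeasure]
  simp_rw [hpt]
  rw [hgauss]
  exact ENNReal.mul_lt_top ENNReal.ofReal_lt_top ENNReal.ofReal_lt_top

theorem absKerOp_exp_mul_nsq (a b : ℝ) {β : ℝ} (hβ : 0 < β) (z : Fin n → ℂ) :
    absKerOp a b (fun w => ((rexp ((b - β) * nsq w) : ℝ) : ℂ)) z
      = (((π / β) ^ n * rexp (((a + b) ^ 2 / (4 * β) - a) * nsq z) : ℝ) : ℂ) := by
  have hpt (w : Fin n → ℂ) : ‖kerAB a b z w‖ * rexp ((b - β) * nsq w)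
      = rexp (((a + b) ^ 2 / (4 * β) - a) * nsq z)
        * rexp (-β * nsq (w - ((a + b) / (2 * β)) • z)) := by
    rw [norm_kerAB_eq hβ.ne', mul_assoc, ← Real.exp_add ((β - b) * _), ← add_mul,
      sub_add_sub_cancel, sub_self, zero_mul, Real.exp_zero, mul_one]
  simp only [absKerOp, ← Complex.ofReal_mul, hpt]
  rw [integral_complex_ofReal, integral_const_mul, integral_exp_neg_mul_nsq_sub hβ, mul_comm]

end Operator

section Necessity

variable {n : ℕ} {a b s p : ℝ}

theorem AbsKerOpBounded.eq (hn : 0 < n) (ha : 0 < a) (hb : 0 < b) (hs : 0 < s) (hp : 0 < p)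
    (h : AbsKerOpBounded n a b s p) : p * (a + b) = 2 * (s + p * a) := by
  obtain ⟨C, -, hC⟩ := h
  by_contra hne
  set σ := s / p
  have hσp : σ * p = s := div_mul_cancel₀ s hp.ne'
  set β := (a + b) ^ 2 / (4 * (a + σ))
  have hβ : 0 < β := by positivity
  have hβσ : (a + b) ^ 2 / (4 * β) - a = σ := by
    simp only [β]
    field_simp
    ring
  have hθ : (b - β) * p < s := by
    have hne' : a + σ ≠ b - σ := fun h => hne (by rw [← hσp]; linear_combination (-p) * h)
    -- strict AM-GM for the two distinct numbers `a + σ` and `b - σ`, whose sum is `a + b`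
    have : b - σ < β := by
      rw [lt_div_iff₀ (by positivity)]
      nlinarith [sq_pos_of_ne_zero (sub_ne_zero.2 hne')]
    rw [← hσp]
    exact mul_lt_mul_of_pos_right (by linarith) hp
  set F : (Fin n → ℂ) → ℂ := fun w => ((rexp ((b - β) * nsq w) : ℝ) : ℂ)
  have hF : MemLp F (ENNReal.ofReal p) (gaussMeasure n s) := memLp_exp_mul_nsq hp hθ
  have hTF : ∫⁻ z, ENNReal.ofReal (‖absKerOp a b F z‖ ^ p) ∂gaussMeasure n s = ⊤ := by
    have hpt (z : Fin n → ℂ) : ENNReal.ofReal (rexp (-s * nsq z))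
        * ENNReal.ofReal (‖absKerOp a b F z‖ ^ p) = ENNReal.ofReal (((π / β) ^ n) ^ p) := by
      rw [absKerOp_exp_mul_nsq a b hβ, hβσ, Complex.norm_real, Real.norm_of_nonneg (by positivity),
        Real.mul_rpow (by positivity) (exp_pos _).le, ← Real.exp_mul,
        ← ENNReal.ofReal_mul (exp_pos _).le, mul_left_comm, ← Real.exp_add, mul_right_comm, hσp,
        neg_mul, neg_add_cancel, Real.exp_zero, mul_one]
    rw [lintegral_gaussMeasure]
    simp_rw [hpt]
    rw [lintegral_const, volume_univ_eq_top hn, ENNReal.mul_top, ENNReal.mul_top] <;>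
      simp only [ne_eq, ENNReal.ofReal_eq_zero, not_le] <;> positivity
  obtain ⟨-, hbound⟩ := hC F hF
  exact (hbound.trans_lt (ENNReal.mul_lt_top ENNReal.ofReal_lt_top
    ((eLpNorm_ofReal_lt_top_iff hp).1 hF.2))).ne hTF

end Necessity

section Sufficiency

variable {n : ℕ} {s p α σ : ℝ}

theorem lintegral_rpow_lintegral_exp_neg_mul_nsq_sub_mul_le (hα : 0 < α)
    {g : (Fin n → ℂ) → ℝ≥0∞} (hg : AEMeasurable g) (hp : 1 ≤ p) :
    ∫⁻ z, (∫⁻ w, ENNReal.ofReal (rexp (-α * nsq (w - z))) * g w) ^ p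
      ≤ ENNReal.ofReal ((π / α) ^ n) ^ p * ∫⁻ w, g w ^ p := by
  refine lintegral_rpow_lintegral_mul_le_of_lintegral_le ?_ hg
    (fun z => (lintegral_exp_neg_mul_nsq_sub hα z).le) (fun w => ?_) hp
  · exact ENNReal.measurable_ofReal.comp (by fun_prop)
  · simp only [nsq_sub_comm w]
    exact (lintegral_exp_neg_mul_nsq_sub hα w).le

theorem norm_kerAB_sub_add (hα : α ≠ 0) (z w : Fin n → ℂ) :
    ‖kerAB (α - σ) (α + σ) z w‖
      = rexp (σ * nsq z) * rexp (-α * nsq (w - z)) * rexp (-σ * nsq w) := by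
  have h1 : (α - σ + (α + σ)) / (2 * α) = 1 := by field_simp; ring
  have h2 : (α - σ + (α + σ)) ^ 2 / (4 * α) - (α - σ) = σ := by field_simp; ring
  rw [norm_kerAB_eq hα, h1, h2, one_smul]
  ring_nf

theorem lintegral_enorm_kerAB_sub_add_mul (hα : α ≠ 0) (f : (Fin n → ℂ) → ℂ)
    (z : Fin n → ℂ) :
    ∫⁻ w, ‖((‖kerAB (α - σ) (α + σ) z w‖ : ℝ) : ℂ) * f w‖ₑ
      = ENNReal.ofReal (rexp (σ * nsq z)) * ∫⁻ w, ENNReal.ofReal (rexp (-α * nsq (w - z)))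
          * (‖f w‖ₑ * ENNReal.ofReal (rexp (-σ * nsq w))) := by
  rw [← lintegral_const_mul' _ _ ENNReal.ofReal_ne_top]
  refine lintegral_congr fun w => ?_
  rw [enorm_mul, ← ofReal_norm (((‖kerAB (α - σ) (α + σ) z w‖ : ℝ) : ℂ)), Complex.norm_real,
    norm_norm, norm_kerAB_sub_add hα, ENNReal.ofReal_mul (by positivity),
    ENNReal.ofReal_mul (by positivity)]
  ring

theorem lintegral_ofReal_norm_rpow_gaussMeasure (hp : 0 ≤ p) (hσ : σ * p = s)
    (f : (Fin n → ℂ) → ℂ) :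
    ∫⁻ z, ENNReal.ofReal (‖f z‖ ^ p) ∂gaussMeasure n s
      = ENNReal.ofReal ((s / π) ^ n) * ∫⁻ w, (‖f w‖ₑ * ENNReal.ofReal (rexp (-σ * nsq w))) ^ p := by
  rw [lintegral_gaussMeasure]
  congr 1
  refine lintegral_congr fun w => ?_
  rw [ofReal_norm_rpow _ hp, ENNReal.mul_rpow_of_nonneg _ _ hp,
    ENNReal.ofReal_rpow_of_nonneg (exp_pos _).le hp, ← Real.exp_mul, mul_comm]
  congr 3
  rw [← hσ]
  ring

theorem lintegral_absKerOp_rpow_le (hα : α ≠ 0) (hp : 0 ≤ p) (hσ : σ * p = s)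
    (f : (Fin n → ℂ) → ℂ) :
    ∫⁻ z, ENNReal.ofReal (‖absKerOp (α - σ) (α + σ) f z‖ ^ p) ∂gaussMeasure n s
      ≤ ENNReal.ofReal ((s / π) ^ n) * ∫⁻ z, (∫⁻ w, ENNReal.ofReal (rexp (-α * nsq (w - z)))
          * (‖f w‖ₑ * ENNReal.ofReal (rexp (-σ * nsq w)))) ^ p := by
  rw [lintegral_gaussMeasure]
  gcongr with z
  set I := ∫⁻ w, ENNReal.ofReal (rexp (-α * nsq (w - z)))
    * (‖f w‖ₑ * ENNReal.ofReal (rexp (-σ * nsq w)))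
  calc ENNReal.ofReal (rexp (-s * nsq z)) * ENNReal.ofReal (‖absKerOp (α - σ) (α + σ) f z‖ ^ p)
      ≤ ENNReal.ofReal (rexp (-s * nsq z)) * (ENNReal.ofReal (rexp (σ * nsq z)) * I) ^ p := by
        rw [ofReal_norm_rpow _ hp, ← lintegral_enorm_kerAB_sub_add_mul hα]
        gcongr
        exact enorm_integral_le_lintegral_enorm _
    _ = I ^ p := by
        rw [ENNReal.mul_rpow_of_nonneg _ _ hp, ← mul_assoc,
          ENNReal.ofReal_rpow_of_nonneg (exp_pos _).le hp, ← ENNReal.ofReal_mul (exp_pos _).le,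
          ← Real.exp_mul, ← Real.exp_add, mul_right_comm, hσ, neg_mul, neg_add_cancel,
          Real.exp_zero, ENNReal.ofReal_one, one_mul]

theorem absKerOpBounded_sub_add (hα : 0 < α) (hs : 0 < s) (hp : 1 ≤ p) (hσ : σ * p = s) :
    AbsKerOpBounded n (α - σ) (α + σ) s p := by
  have hp0 : 0 < p := zero_lt_one.trans_le hp
  refine ⟨(π / α) ^ n, by positivity, fun f hf => ?_⟩
  have hf_vol : AEStronglyMeasurable f volume :=
    hf.1.mono_ac (absolutelyContinuous_gaussMeasure hs)
  set g : (Fin n → ℂ) → ℝ≥0∞ := fun w => ‖f w‖ₑ * ENNReal.ofReal (rexp (-σ * nsq w))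
  have hg : AEMeasurable g :=
    hf_vol.enorm.mul (ENNReal.measurable_ofReal.comp (by fun_prop)).aemeasurable
  set I : (Fin n → ℂ) → ℝ≥0∞ := fun z => ∫⁻ w, ENNReal.ofReal (rexp (-α * nsq (w - z))) * g w
  have hfg := lintegral_ofReal_norm_rpow_gaussMeasure hp0.le hσ f
  have hSchur := lintegral_rpow_lintegral_exp_neg_mul_nsq_sub_mul_le hα hg hp
  have hg_fin : ∫⁻ w, g w ^ p < ⊤ := by
    have hf_fin := (eLpNorm_ofReal_lt_top_iff hp0).1 hf.2
    rw [hfg] at hf_fin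
    exact ENNReal.lt_top_of_mul_ne_top_right hf_fin.ne (ENNReal.ofReal_pos.2 (by positivity)).ne'
  have hI_fin : ∀ᵐ z, I z < ⊤ := by
    have hk : Measurable fun q : (Fin n → ℂ) × (Fin n → ℂ) =>
        ENNReal.ofReal (rexp (-α * nsq (q.2 - q.1))) :=
      ENNReal.measurable_ofReal.comp (by fun_prop)
    have hI : AEMeasurable I := (hk.aemeasurable.mul hg.comp_snd).lintegral_prod_right'
    filter_upwards [ae_lt_top' (hI.pow_const p) (hSchur.trans_lt (ENNReal.mul_lt_top
      (ENNReal.rpow_lt_top_of_nonneg hp0.le ENNReal.ofReal_ne_top) hg_fin)).ne] with z hz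
    exact (ENNReal.rpow_lt_top_iff_of_pos hp0).1 hz
  refine ⟨?_, ?_⟩
  · filter_upwards [hI_fin] with z hz
    refine ⟨Continuous.aestronglyMeasurable (by unfold kerAB herm; fun_prop) |>.mul hf_vol, ?_⟩
    rw [hasFiniteIntegral_iff_enorm, lintegral_enorm_kerAB_sub_add_mul hα.ne']
    exact ENNReal.mul_lt_top ENNReal.ofReal_lt_top hz
  · calc ∫⁻ z, ENNReal.ofReal (‖absKerOp (α - σ) (α + σ) f z‖ ^ p) ∂gaussMeasure n s
        ≤ ENNReal.ofReal ((s / π) ^ n) * (ENNReal.ofReal ((π / α) ^ n) ^ p * ∫⁻ w, g w ^ p) := by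
          grw [lintegral_absKerOp_rpow_le hα.ne' hp0.le hσ, hSchur]
      _ = ENNReal.ofReal (((π / α) ^ n) ^ p)
            * ∫⁻ z, ENNReal.ofReal (‖f z‖ ^ p) ∂gaussMeasure n s := by
          rw [hfg, ENNReal.ofReal_rpow_of_nonneg (by positivity) hp0.le]
          ring

theorem absKerOpBounded_of_eq {a b : ℝ} (ha : 0 < a) (hs : 0 < s) (hp : 1 ≤ p)
    (h : p * (a + b) = 2 * (s + p * a)) : AbsKerOpBounded n a b s p := by
  have hp0 : 0 < p := zero_lt_one.trans_le hp
  have hb : a + s / p + s / p = b := by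
    field_simp
    linear_combination -h
  have key := absKerOpBounded_sub_add (n := n) (α := a + s / p) (σ := s / p) (by positivity) hs hp
    (div_mul_cancel₀ s hp0.ne')
  rwa [add_sub_cancel_right, hb] at key

end Sufficiency

theorem stmt17 (n : ℕ) (hn : 0 < n) (a b s p : ℝ) (ha : 0 < a) (hb : 0 < b)
    (hs : 0 < s) (hp : 1 ≤ p) :
    (∃ C : ℝ, 0 ≤ C ∧
      ∀ f : (Fin n → ℂ) → ℂ, MemLp f (ENNReal.ofReal p) (gaussMeasure n s) →
        (∀ᵐ z ∂(volume : Measure (Fin n → ℂ)),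
          Integrable (fun w => ((‖kerAB a b z w‖ : ℝ) : ℂ) * f w) volume) ∧
        ∫⁻ z, ENNReal.ofReal
            (‖∫ w, ((‖kerAB a b z w‖ : ℝ) : ℂ) * f w‖ ^ p)
            ∂(gaussMeasure n s)
          ≤ ENNReal.ofReal (C ^ p) *
            ∫⁻ z, ENNReal.ofReal (‖f z‖ ^ p) ∂(gaussMeasure n s)) ↔
    p * (a + b) = 2 * (s + p * a) :=
  ⟨AbsKerOpBounded.eq hn ha hb hs (zero_lt_one.trans_le hp), absKerOpBounded_of_eq ha hs hp⟩
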